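/- For all nonnegative integers n and m, the following identity holds in ℚ(q): Σ_{k=0}^{⌊n/4⌋} (−1)^k · q^{4·C(k,2)} · [m+n−4k choose m]_q · [m+1 choose k]_{q^4} = Σ_{k=0}^{⌊n/2⌋} q^{C(n−2k,2)+2·C(k,2)} · [m+1 choose n−2k]_q · [m+1 choose k]_{q^2}. -/

import Mathlib

/-!
Both sides are coefficients of `T^n` in products of generating series. By Cauchy's
`q`-binomial theorem, `∏_{i<N} (1 + a x^i T) = ∑_k a^k x^(C(k,2)) [N choose k]_x T^k`, and
`∑_l [m+l choose m]_q T^l` is the inverse of `∏_{i≤m} (1 - q^i T)`. Substituting `T ↦ T^4` resp.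
`T ↦ T^2` in the first expansion, the identity becomes the coefficient of `T^n` in
`∏_{i≤m} (1 - q^{4i} T^4) / (1 - q^i T) = ∏_{i≤m} (1 + q^i T) (1 + q^{2i} T^2)`,
which is `1 - y^4 = (1 - y)(1 + y)(1 + y^2)` for `y = q^i T`.
-/

/-- The Gaussian (q-)binomial coefficient `[a choose b]` with parameter `x`,
`∏_{j=1}^{b} (1 - x^{a-b+j})/(1 - x^j)`, an element of `ℚ(q)` when `x = q`;
it is zero when `b > a`. -/
noncomputable def qbinom (x : RatFunc ℚ) (a b : ℕ) : RatFunc ℚ :=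
  if b ≤ a then ∏ j ∈ Finset.range b, (1 - x ^ (a - b + j + 1)) / (1 - x ^ (j + 1)) else 0

/-- The indeterminate `q` of the field of rational functions `ℚ(q)`. -/
noncomputable def q : RatFunc ℚ := RatFunc.X

open Finset PowerSeries

theorem PowerSeries.coeff_expand_mul_eq_sum {R : Type*} [CommRing R] {d : ℕ} (hd : d ≠ 0)
    (f g : PowerSeries R) (n : ℕ) :
    coeff n (expand d hd f * g) = ∑ k ∈ range (n / d + 1), coeff k f * coeff (n - d * k) g := by
  have hle {k : ℕ} (hk : k < n / d + 1) : d * k ≤ n :=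
    (Nat.mul_le_mul_left d (Nat.lt_succ_iff.mp hk)).trans (Nat.mul_div_le n d)
  rw [coeff_mul]
  symm
  refine sum_of_injOn (fun k ↦ (d * k, n - d * k)) ?_ ?_ ?_ ?_
  · intro k _ l _ h
    exact Nat.eq_of_mul_eq_mul_left (Nat.pos_of_ne_zero hd) (congrArg Prod.fst h)
  · intro k hk
    simp only [coe_range, Set.mem_Iio] at hk
    simp [Nat.add_sub_cancel' (hle hk)]
  · rintro ⟨i, j⟩ hij hnot
    rw [HasAntidiagonal.mem_antidiagonal] at hij
    rw [coeff_expand, if_neg, zero_mul]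
    rintro ⟨k, rfl⟩
    refine hnot ⟨k, ?_, by simp only [Prod.mk.injEq, true_and]; omega⟩
    simpa [Nat.lt_succ_iff, Nat.le_div_iff_mul_le (Nat.pos_of_ne_zero hd), mul_comm] using
      (show d * k ≤ n by omega)
  · intro k _
    rw [coeff_expand_mul]

section QBinom

variable {x : RatFunc ℚ}

noncomputable def qfact (x : RatFunc ℚ) (n : ℕ) : RatFunc ℚ :=
  ∏ j ∈ range n, (1 - x ^ (j + 1))

theorem qfact_succ (x : RatFunc ℚ) (n : ℕ) :
    qfact x (n + 1) = qfact x n * (1 - x ^ (n + 1)) :=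
  prod_range_succ _ _

theorem one_sub_pow_succ_ne_zero (hx : ¬IsOfFinOrder x) (n : ℕ) : 1 - x ^ (n + 1) ≠ 0 :=
  sub_ne_zero.mpr fun h ↦ hx (isOfFinOrder_iff_pow_eq_one.mpr ⟨n + 1, n.succ_pos, h.symm⟩)

theorem qfact_ne_zero (hx : ¬IsOfFinOrder x) (n : ℕ) : qfact x n ≠ 0 :=
  prod_ne_zero_iff.mpr fun j _ ↦ one_sub_pow_succ_ne_zero hx j

theorem qbinom_of_lt {a b : ℕ} (h : a < b) : qbinom x a b = 0 := by
  rw [qbinom, if_neg h.not_ge]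

theorem qbinom_zero_right (x : RatFunc ℚ) (a : ℕ) : qbinom x a 0 = 1 := by
  rw [qbinom, if_pos a.zero_le, prod_range_zero]

theorem qbinom_eq_div (hx : ¬IsOfFinOrder x) {a b : ℕ} (h : b ≤ a) :
    qbinom x a b = qfact x a / (qfact x b * qfact x (a - b)) := by
  obtain ⟨c, rfl⟩ := Nat.exists_eq_add_of_le h
  have hsplit : qfact x (b + c) = qfact x c * ∏ j ∈ range b, (1 - x ^ (c + j + 1)) := by
    rw [qfact, add_comm b c, prod_range_add]
    simp only [add_assoc]
    rfl
  rw [qbinom, if_pos h, Nat.add_sub_cancel_left, prod_div_distrib, hsplit]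
  change _ / qfact x b = _
  field_simp [qfact_ne_zero hx]

theorem qbinom_self (hx : ¬IsOfFinOrder x) (a : ℕ) : qbinom x a a = 1 := by
  rw [qbinom_eq_div hx le_rfl, Nat.sub_self, show qfact x 0 = 1 from prod_range_zero _, mul_one,
    div_self (qfact_ne_zero hx a)]

theorem qbinom_succ_succ (hx : ¬IsOfFinOrder x) (n k : ℕ) :
    qbinom x (n + 1) (k + 1) = qbinom x n k + x ^ (k + 1) * qbinom x n (k + 1) := by
  rcases lt_trichotomy n k with h | rfl | h
  · rw [qbinom_of_lt h, qbinom_of_lt (by omega), qbinom_of_lt (by omega)]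
    ring
  · rw [qbinom_self hx, qbinom_self hx, qbinom_of_lt (by omega)]
    ring
  · obtain ⟨c, rfl⟩ : ∃ c, n = k + 1 + c := ⟨n - k - 1, by omega⟩
    rw [qbinom_eq_div hx (by omega), qbinom_eq_div hx (by omega), qbinom_eq_div hx (by omega),
      show k + 1 + c + 1 - (k + 1) = c + 1 by omega, show k + 1 + c - k = c + 1 by omega,
      show k + 1 + c - (k + 1) = c by omega, qfact_succ x (k + 1 + c), qfact_succ x k,
      qfact_succ x c]
    field_simp [qfact_ne_zero hx, one_sub_pow_succ_ne_zero hx]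
    ring

theorem coeff_prod_one_add_C_mul_X (hx : ¬IsOfFinOrder x) (a : RatFunc ℚ) (n k : ℕ) :
    coeff k (∏ i ∈ range n, (1 + C (a * x ^ i) * X)) = a ^ k * x ^ k.choose 2 * qbinom x n k := by
  induction n generalizing a k with
  | zero =>
    rcases k with _ | k
    · simp [qbinom_zero_right]
    · simp [qbinom_of_lt k.succ_pos]
  | succ n ih =>
    simp_rw [prod_range_succ', pow_succ, ← mul_assoc, mul_right_comm a]
    rw [mul_add, mul_one, pow_zero, mul_one, mul_left_comm, map_add, coeff_C_mul]
    rcases k with _ | k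
    · simp [qbinom_zero_right]
    · rw [coeff_succ_mul_X, ih, ih, qbinom_succ_succ hx, Nat.choose_succ_succ',
        Nat.choose_one_right]
      ring

noncomputable def qbinomSeries (x : RatFunc ℚ) (m : ℕ) : PowerSeries (RatFunc ℚ) :=
  PowerSeries.mk fun l ↦ qbinom x (m + l) m

theorem qbinomSeries_zero (x : RatFunc ℚ) : qbinomSeries x 0 = PowerSeries.mk 1 := by
  ext l
  simp [qbinomSeries, qbinom_zero_right]

theorem qbinomSeries_succ_mul (hx : ¬IsOfFinOrder x) (m : ℕ) :
    qbinomSeries x (m + 1) * (1 - C (x ^ (m + 1)) * X) = qbinomSeries x m := by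
  ext l
  rw [mul_sub, mul_one, mul_left_comm, map_sub, coeff_C_mul]
  rcases l with _ | l
  · simp [qbinomSeries, qbinom_self hx]
  · rw [coeff_succ_mul_X]
    simp only [qbinomSeries, coeff_mk]
    rw [show m + 1 + (l + 1) = m + l + 1 + 1 by ring, show m + 1 + l = m + l + 1 by ring,
      qbinom_succ_succ hx, ← add_assoc]
    ring

theorem qbinomSeries_mul_prod (hx : ¬IsOfFinOrder x) (m : ℕ) :
    qbinomSeries x m * ∏ i ∈ range (m + 1), (1 - C (x ^ i) * X) = 1 := by
  induction m with
  | zero => simp [qbinomSeries_zero, mk_one_mul_one_sub_eq_one]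
  | succ m ih =>
    rw [prod_range_succ, mul_comm _ (1 - C _ * X), ← mul_assoc, qbinomSeries_succ_mul hx, ih]

theorem expand_four_mul_qbinomSeries (hx : ¬IsOfFinOrder x) (m : ℕ) :
    expand 4 four_ne_zero (∏ i ∈ range (m + 1), (1 - C ((x ^ 4) ^ i) * X)) * qbinomSeries x m =
      expand 2 two_ne_zero (∏ i ∈ range (m + 1), (1 + C ((x ^ 2) ^ i) * X)) *
        ∏ i ∈ range (m + 1), (1 + C (x ^ i) * X) := by
  have hfactor : expand 4 four_ne_zero (∏ i ∈ range (m + 1), (1 - C ((x ^ 4) ^ i) * X)) =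
      expand 2 two_ne_zero (∏ i ∈ range (m + 1), (1 + C ((x ^ 2) ^ i) * X)) *
        (∏ i ∈ range (m + 1), (1 + C (x ^ i) * X)) * ∏ i ∈ range (m + 1), (1 - C (x ^ i) * X) := by
    simp only [map_prod, ← prod_mul_distrib]
    refine prod_congr rfl fun i _ ↦ ?_
    simp only [map_add, map_sub, map_one, map_mul, expand_C, expand_X, map_pow]
    ring
  rw [hfactor, mul_assoc, mul_comm _ (qbinomSeries x m), qbinomSeries_mul_prod hx, mul_one]

end QBinom

theorem not_isOfFinOrder_q : ¬IsOfFinOrder q := by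
  rw [isOfFinOrder_iff_pow_eq_one]
  rintro ⟨n, hn, h⟩
  have hX : (Polynomial.X ^ n : Polynomial ℚ) = 1 :=
    RatFunc.algebraMap_injective ℚ (by simpa [q] using h)
  simpa [hn.ne'] using congrArg Polynomial.natDegree hX

theorem stmt_17 (n m : ℕ) :
    ∑ k ∈ Finset.range (n / 4 + 1),
      (-1 : RatFunc ℚ) ^ k * q ^ (4 * Nat.choose k 2) * qbinom q (m + n - 4 * k) m *
        qbinom (q ^ 4) (m + 1) k
    = ∑ k ∈ Finset.range (n / 2 + 1),
        q ^ (Nat.choose (n - 2 * k) 2 + 2 * Nat.choose k 2) * qbinom q (m + 1) (n - 2 * k) *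
          qbinom (q ^ 2) (m + 1) k := by
  have hq (d : ℕ) (hd : d ≠ 0) : ¬IsOfFinOrder (q ^ d) := fun h ↦ not_isOfFinOrder_q (h.of_pow hd)
  have h := congrArg (coeff n) (expand_four_mul_qbinomSeries not_isOfFinOrder_q m)
  rw [coeff_expand_mul_eq_sum, coeff_expand_mul_eq_sum] at h
  convert h using 1 <;> refine sum_congr rfl fun k hk ↦ ?_
  · have h4k : 4 * k ≤ n := by
      have := Nat.mul_div_le n 4
      rw [mem_range] at hk
      omega
    have hA := coeff_prod_one_add_C_mul_X (hq 4 four_ne_zero) (-1) (m + 1) k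
    simp only [neg_mul, one_mul, map_neg, ← sub_eq_add_neg] at hA
    rw [hA, qbinomSeries, coeff_mk, ← Nat.add_sub_assoc h4k, ← pow_mul]
    ring
  · have hB := coeff_prod_one_add_C_mul_X (hq 2 two_ne_zero) 1 (m + 1) k
    have hC := coeff_prod_one_add_C_mul_X not_isOfFinOrder_q 1 (m + 1) (n - 2 * k)
    simp only [one_mul, one_pow] at hB hC
    rw [hB, hC, ← pow_mul, pow_add]
    ring
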